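/- arXiv:2310.05461 — 5 statements merged into one kernel-verified Lean document; each statement's English description precedes it below -/
import Mathlib

section
/- If f ∈ L²(α), g ∈ L²₀(β) (i.e. ∫g dβ = 0), and π is a probability density on X×Y with respect to α⊗β whose marginals are α and β and which is bounded below by a constant C > 0, then ∫∫ (f(x)+g(y))² π(x,y) dα(x)dβ(y) ≥ C(‖f‖²_{L²(α)} + ‖g‖²_{L²(β)}). -/
/-!
Since `π ≥ C` pointwise, the double integral dominates `C ∫ (f x + g y)² d(α ⊗ β)`. Expanding the
square on the product, the cross term is `2 (∫ f dα) (∫ g dβ) = 0`, and the two squares integrate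
to `‖f‖²` and `‖g‖²` because `α` and `β` are probability measures.
-/

open MeasureTheory

theorem integral_prod_add_sq_of_integral_eq_zero {X Y : Type*} [MeasurableSpace X]
    [MeasurableSpace Y] {α : Measure X} {β : Measure Y}
    [IsProbabilityMeasure α] [IsProbabilityMeasure β] {f : X → ℝ} {g : Y → ℝ}
    (hf : MemLp f 2 α) (hg : MemLp g 2 β) (hg0 : ∫ y, g y ∂β = 0) :
    ∫ z, (f z.1 + g z.2) ^ 2 ∂α.prod β = (∫ x, f x ^ 2 ∂α) + ∫ y, g y ^ 2 ∂β := by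
  have hf2 : Integrable (fun z : X × Y => f z.1 ^ 2) (α.prod β) :=
    (hf.comp_fst β).integrable_sq
  have hg2 : Integrable (fun z : X × Y => g z.2 ^ 2) (α.prod β) :=
    (hg.comp_snd α).integrable_sq
  have hfg : Integrable (fun z : X × Y => 2 * (f z.1 * g z.2)) (α.prod β) :=
    ((hf.integrable one_le_two).mul_prod (hg.integrable one_le_two)).const_mul 2
  have hexpand : (fun z : X × Y => (f z.1 + g z.2) ^ 2)
      = fun z => f z.1 ^ 2 + 2 * (f z.1 * g z.2) + g z.2 ^ 2 := by
    funext z; ring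
  rw [hexpand, integral_add (hf2.fun_add hfg) hg2, integral_add hf2 hfg, integral_const_mul,
    integral_prod_mul, hg0, integral_fun_fst (fun x => f x ^ 2),
    integral_fun_snd (fun y => g y ^ 2)]
  simp

theorem density_coercivity_general {X Y : Type*} [MeasurableSpace X] [MeasurableSpace Y]
    (α : Measure X) (β : Measure Y)
    [IsProbabilityMeasure α] [IsProbabilityMeasure β]
    (π : X × Y → ℝ)
    (C : ℝ) (hlow : ∀ x y, C ≤ π (x, y))
    (f : X → ℝ) (g : Y → ℝ)
    (hf : MemLp f 2 α) (hg : MemLp g 2 β)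
    (hg0 : ∫ y, g y ∂β = 0)
    (hintegrable : Integrable (fun z : X × Y => (f z.1 + g z.2) ^ 2 * π z) (α.prod β)) :
    C * ((∫ x, (f x) ^ 2 ∂α) + ∫ y, (g y) ^ 2 ∂β) ≤
      ∫ x, ∫ y, (f x + g y) ^ 2 * π (x, y) ∂β ∂α := by
  have hsq : Integrable (fun z : X × Y => (f z.1 + g z.2) ^ 2) (α.prod β) :=
    ((hf.comp_fst β).add (hg.comp_snd α)).integrable_sq
  calc C * ((∫ x, f x ^ 2 ∂α) + ∫ y, g y ^ 2 ∂β)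
      = ∫ z, C * (f z.1 + g z.2) ^ 2 ∂α.prod β := by
        rw [integral_const_mul, integral_prod_add_sq_of_integral_eq_zero hf hg hg0]
    _ ≤ ∫ z, (f z.1 + g z.2) ^ 2 * π z ∂α.prod β :=
        integral_mono (hsq.const_mul C) hintegrable fun z =>
          (mul_comm C _).trans_le (mul_le_mul_of_nonneg_left (hlow z.1 z.2) (sq_nonneg _))
    _ = ∫ x, ∫ y, (f x + g y) ^ 2 * π (x, y) ∂β ∂α := integral_prod _ hintegrable

/-- If `f ∈ L²(α)`, `g ∈ L²(β)` with `∫ g dβ = 0`, and `π` is a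
probability density on `X × Y` w.r.t. `α ⊗ β` whose marginals are `α` and `β`
and which is bounded below by `C > 0`, then
`∫∫ (f x + g y)² π(x,y) dα dβ ≥ C (‖f‖²_{L²(α)} + ‖g‖²_{L²(β)})`. -/
theorem density_coercivity {X Y : Type*} [MeasurableSpace X] [MeasurableSpace Y]
    (α : Measure X) (β : Measure Y)
    [IsProbabilityMeasure α] [IsProbabilityMeasure β]
    (π : X × Y → ℝ) (hπmeas : Measurable π)
    (C : ℝ) (hC : 0 < C) (hlow : ∀ x y, C ≤ π (x, y))
    (hmarg1 : ∀ᵐ x ∂α, ∫ y, π (x, y) ∂β = 1)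
    (hmarg2 : ∀ᵐ y ∂β, ∫ x, π (x, y) ∂α = 1)
    (f : X → ℝ) (g : Y → ℝ)
    (hf : MemLp f 2 α) (hg : MemLp g 2 β)
    (hg0 : ∫ y, g y ∂β = 0)
    (hintegrable : Integrable (fun z : X × Y => (f z.1 + g z.2) ^ 2 * π z) (α.prod β)) :
    C * ((∫ x, (f x) ^ 2 ∂α) + ∫ y, (g y) ^ 2 ∂β) ≤
      ∫ x, ∫ y, (f x + g y) ^ 2 * π (x, y) ∂β ∂α :=
  density_coercivity_general α β π C hlow f g hf hg hg0 hintegrable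
end

section
/- Let W: ℝ^s → ℝ be strictly convex and C², Â ∈ ℝ^s with support I = {i : Âᵢ ≠ 0}, and suppose H = ∇²W(Â) is positive definite. Define z* = H_{(:,I)} (H_{(I,I)})^{-1} sign(Â)_I. Then z* ∈ ∂‖Â‖₁ if and only if ‖(z*)_{I^c}‖_∞ ≤ 1; moreover z* is the unique minimizer of z ↦ ⟨z, H^{-1} z⟩ over z ∈ ∂‖Â‖₁ whenever ‖(z*)_{I^c}‖_∞ < 1. -/
attribute [local instance] Classical.propDecidable

open Matrix

lemma sum_extend {s : ℕ} (p : Fin s → Prop) [DecidablePred p] (g : {i // p i} → ℝ) :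
    ∑ i : Fin s, (if h : p i then g ⟨i, h⟩ else 0) = ∑ i : {i // p i}, g i := by
  have h1 : ∑ i : {i // p i}, g i
      = ∑ i : {i // p i}, (if h : p i.val then g ⟨i.val, h⟩ else 0) := by
    refine Finset.sum_congr rfl fun i _ => ?_
    rw [dif_pos i.2]
  rw [h1, ← Finset.sum_subtype (Finset.univ.filter p) (by simp)
    (fun i => if h : p i then g ⟨i, h⟩ else 0)]
  refine (Finset.sum_subset (Finset.filter_subset p Finset.univ) ?_).symm
  intro x _ hx
  simp only [Finset.mem_filter, Finset.mem_univ, true_and] at hx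
  simp [hx]


lemma abs_sign_le (t : ℝ) : |Real.sign t| ≤ 1 := by
  rcases lt_trichotomy t 0 with h|h|h <;>
    simp [Real.sign_of_neg, Real.sign_of_pos, h]


/-- The subdifferential of the ℓ¹ norm at `Ahat`. -/
def l1Subdiff {s : ℕ} (Ahat : Fin s → ℝ) : Set (Fin s → ℝ) :=
  {z | (∀ i, |z i| ≤ 1) ∧ ∀ i, Ahat i ≠ 0 → z i = Real.sign (Ahat i)}

/-- with `H = ∇²W(Â)` positive definite and
`z* = H_{(:,I)} (H_{(I,I)})⁻¹ sign(Â)_I` for `I = supp(Â)`: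
`z* ∈ ∂‖Â‖₁ ↔ ‖(z*)_{Iᶜ}‖_∞ ≤ 1`, and if `‖(z*)_{Iᶜ}‖_∞ < 1` then `z*` is the
unique minimizer of `z ↦ ⟨z, H⁻¹ z⟩` over `∂‖Â‖₁`. -/
theorem certificate_characterization {s : ℕ}
    (W : (Fin s → ℝ) → ℝ)
    (hWconv : StrictConvexOn ℝ Set.univ W)
    (hWsmooth : ContDiff ℝ 2 W)
    (Ahat : Fin s → ℝ)
    (H : Matrix (Fin s) (Fin s) ℝ)
    (hH : ∀ i j, H i j = fderiv ℝ (fun A => fderiv ℝ W A (Pi.single j 1)) Ahat (Pi.single i 1))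
    (hHpd : H.PosDef)
    (HII : Matrix {i : Fin s // Ahat i ≠ 0} {i : Fin s // Ahat i ≠ 0} ℝ)
    (hHII : ∀ i j : {i : Fin s // Ahat i ≠ 0}, HII i j = H i j)
    (zstar : Fin s → ℝ)
    (hzstar : ∀ i, zstar i =
      ∑ j : {i : Fin s // Ahat i ≠ 0}, H i j *
        (HII⁻¹ *ᵥ (fun k : {i : Fin s // Ahat i ≠ 0} => Real.sign (Ahat k))) j) :
    (zstar ∈ l1Subdiff Ahat ↔ ∀ i, Ahat i = 0 → |zstar i| ≤ 1) ∧
    ((∀ i, Ahat i = 0 → |zstar i| < 1) →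
      zstar ∈ l1Subdiff Ahat ∧
      ∀ z ∈ l1Subdiff Ahat, z ≠ zstar →
        zstar ⬝ᵥ (H⁻¹ *ᵥ zstar) < z ⬝ᵥ (H⁻¹ *ᵥ z)) := by
  have hHsymm : ∀ i j, H j i = H i j := fun i j => by
    have := congrFun (congrFun hHpd.1 j) i
    simpa using this.symm
  -- HII is positive definite
  have hHIIpd : HII.PosDef := by
    rw [posDef_iff_dotProduct_mulVec]
    constructor
    · ext i j
      simp only [conjTranspose_apply, hHII, star_trivial]
      exact hHsymm _ _ |>.symm ▸ (hHsymm j.val i.val)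
    · intro x hx
      set xt : Fin s → ℝ := fun i => if h : Ahat i ≠ 0 then x ⟨i, h⟩ else 0 with hxt
      have hxt0 : xt ≠ 0 := by
        intro h0
        apply hx
        ext i
        have := congrFun h0 i.val
        simpa [hxt, i.2] using this
      have key : star x ⬝ᵥ (HII *ᵥ x) = star xt ⬝ᵥ (H *ᵥ xt) := by
        simp only [dotProduct, mulVec, star_trivial, Pi.star_apply]
        have inner : ∀ i : Fin s, ∑ j, H i j * xt j
            = ∑ j : {i : Fin s // Ahat i ≠ 0}, H i j.val * x j := by
          intro i
          rw [← sum_extend (fun j => Ahat j ≠ 0) (fun j => H i j.val * x j)]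
          refine Finset.sum_congr rfl fun j _ => ?_
          simp only [hxt]
          by_cases h : Ahat j ≠ 0
          · rw [dif_pos h, dif_pos h]
          · rw [dif_neg h, dif_neg h, mul_zero]
        calc ∑ i : {i : Fin s // Ahat i ≠ 0}, star (x i) * ∑ j, HII i j * x j
            = ∑ i : {i : Fin s // Ahat i ≠ 0},
                (x i * ∑ j : {i : Fin s // Ahat i ≠ 0}, H i.val j.val * x j) := by
              refine Finset.sum_congr rfl fun i _ => ?_
              simp [hHII]
          _ = ∑ i : Fin s, star (xt i) * ∑ j, H i j * xt j := by
              rw [← sum_extend (fun i => Ahat i ≠ 0)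
                (fun i => x i * ∑ j : {i : Fin s // Ahat i ≠ 0}, H i.val j.val * x j)]
              refine Finset.sum_congr rfl fun i _ => ?_
              rw [inner i]
              simp only [hxt, star_trivial]
              by_cases h : Ahat i ≠ 0
              · rw [dif_pos h, dif_pos h]
              · rw [dif_neg h, dif_neg h, zero_mul]
      rw [key]
      exact hHpd.dotProduct_mulVec_pos hxt0
  set w : {i : Fin s // Ahat i ≠ 0} → ℝ :=
    HII⁻¹ *ᵥ (fun k : {i : Fin s // Ahat i ≠ 0} => Real.sign (Ahat k)) with hw
  set wt : Fin s → ℝ := fun i => if h : Ahat i ≠ 0 then w ⟨i, h⟩ else 0 with hwt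
  -- zstar = H *ᵥ wt
  have hzw : zstar = H *ᵥ wt := by
    funext i
    rw [hzstar i]
    show _ = ∑ j, H i j * wt j
    rw [← sum_extend (fun j => Ahat j ≠ 0) (fun j => H i j.val * w j)]
    refine Finset.sum_congr rfl fun j _ => ?_
    simp only [hwt]
    by_cases h : Ahat j ≠ 0
    · rw [dif_pos h, dif_pos h]
    · rw [dif_neg h, dif_neg h, mul_zero]
  -- H⁻¹ *ᵥ zstar = wt
  have hinvz : H⁻¹ *ᵥ zstar = wt := by
    rw [hzw, mulVec_mulVec, Matrix.nonsing_inv_mul H hHpd.det_pos.ne'.isUnit, one_mulVec]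
  -- zstar agrees with sign on the support
  have hzsign : ∀ i (h : Ahat i ≠ 0), zstar i = Real.sign (Ahat i) := by
    intro i h
    have h1 : zstar i = (HII *ᵥ w) ⟨i, h⟩ := by
      rw [hzstar i]
      simp only [mulVec, dotProduct]
      exact Finset.sum_congr rfl fun j _ => by rw [hHII ⟨i, h⟩ j]
    rw [h1, hw, mulVec_mulVec, Matrix.mul_nonsing_inv HII hHIIpd.det_pos.ne'.isUnit,
      one_mulVec]
  constructor
  · constructor
    · intro hz i hi
      exact hz.1 i
    · intro hb
      refine ⟨fun i => ?_, fun i h => hzsign i h⟩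
      by_cases h : Ahat i = 0
      · exact hb i h
      · rw [hzsign i h]; exact abs_sign_le _
  · intro hlt
    have hmem : zstar ∈ l1Subdiff Ahat := by
      refine ⟨fun i => ?_, fun i h => hzsign i h⟩
      by_cases h : Ahat i = 0
      · exact (hlt i h).le
      · rw [hzsign i h]; exact abs_sign_le _
    refine ⟨hmem, fun z hz hne => ?_⟩
    set d : Fin s → ℝ := z - zstar with hd
    have hdsupp : ∀ i, Ahat i ≠ 0 → d i = 0 := by
      intro i h
      simp only [hd, Pi.sub_apply, hz.2 i h, hzsign i h, sub_self]
    have hd0 : d ≠ 0 := sub_ne_zero.mpr hne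
    have hMpd : (H⁻¹).PosDef := hHpd.inv
    have hMsymm : (H⁻¹)ᵀ = H⁻¹ := by
      have := hMpd.1
      rw [IsHermitian] at this
      simpa using this
    have hdz : d ⬝ᵥ (H⁻¹ *ᵥ zstar) = 0 := by
      rw [hinvz, dotProduct]
      refine Finset.sum_eq_zero fun i _ => ?_
      by_cases h : Ahat i ≠ 0
      · rw [hdsupp i h, zero_mul]
      · simp only [hwt]; rw [dif_neg h, mul_zero]
    have hzd : zstar ⬝ᵥ (H⁻¹ *ᵥ d) = 0 := by
      rw [dotProduct_mulVec, ← hMsymm, vecMul_transpose, dotProduct_comm]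
      exact hdz
    have hdd : 0 < d ⬝ᵥ (H⁻¹ *ᵥ d) := by
      have := hMpd.dotProduct_mulVec_pos hd0
      simpa using this
    have hexp : z ⬝ᵥ (H⁻¹ *ᵥ z)
        = zstar ⬝ᵥ (H⁻¹ *ᵥ zstar) + d ⬝ᵥ (H⁻¹ *ᵥ d) := by
      have hzdecomp : z = zstar + d := by rw [hd]; ring_nf
      rw [hzdecomp, mulVec_add, dotProduct_add, add_dotProduct, add_dotProduct,
        hzd, hdz]
      ring
    rw [hexp]
    linarith
end

section
/- Strong convexity of the entropic dual: for F, F', G, G' ∈ ℝⁿ with Σⱼ Gⱼ = Σⱼ G'ⱼ = 0 and matrices M, M' ∈ ℝ^{n×n} with all rows and columns summing to zero, if all entries of tM + (1−t)M' + (tF+(1−t)F')⊕(tG+(1−t)G') are bounded in absolute value by L/2 for all t ∈ [0,1], then the function h(t) = (ε/(2n²)) Σ_{i,j} exp((2/ε)(tF+(1−t)F' ⊕ tG+(1−t)G' + tM+(1−t)M')_{ij}) satisfies h''(t) ≥ (2/ε)e^{−L/ε}( (1/n²)‖M−M'‖²_F + (1/n)‖F−F'‖² + (1/n)‖G−G'‖²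 ). -/
/-- strong convexity of the entropic dual along segments. -/
theorem entropic_dual_strong_convexity {n : ℕ} (hn : 0 < n) (ε : ℝ) (hε : 0 < ε)
    (F F' G G' : Fin n → ℝ)
    (M M' : Matrix (Fin n) (Fin n) ℝ)
    (hG : ∑ j, G j = 0) (hG' : ∑ j, G' j = 0)
    (hMrow : ∀ i, ∑ j, M i j = 0) (hMcol : ∀ j, ∑ i, M i j = 0)
    (hM'row : ∀ i, ∑ j, M' i j = 0) (hM'col : ∀ j, ∑ i, M' i j = 0)
    (L : ℝ)
    (Z : ℝ → Fin n → Fin n → ℝ)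
    (hZ : ∀ t i j, Z t i j =
      (t * F i + (1 - t) * F' i) + (t * G j + (1 - t) * G' j)
        + (t * M i j + (1 - t) * M' i j))
    (hL : ∀ t ∈ Set.Icc (0 : ℝ) 1, ∀ i j, |Z t i j| ≤ L / 2)
    (h : ℝ → ℝ)
    (hh : ∀ t, h t = ε / (2 * (n : ℝ) ^ 2) * ∑ i, ∑ j, Real.exp (2 / ε * Z t i j)) :
    ∀ t ∈ Set.Icc (0 : ℝ) 1,
      2 / ε * Real.exp (-L / ε) *
        ((1 / (n : ℝ) ^ 2) * (∑ i, ∑ j, (M i j - M' i j) ^ 2)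
          + (1 / (n : ℝ)) * (∑ i, (F i - F' i) ^ 2)
          + (1 / (n : ℝ)) * (∑ j, (G j - G' j) ^ 2)) ≤ deriv (deriv h) t := by
  intro t ht
  have hn' : (0:ℝ) < (n:ℝ) := by exact_mod_cast hn
  set k : ℝ := 2 / ε with hk
  have hkpos : 0 < k := by positivity
  set c : ℝ := ε / (2 * (n : ℝ) ^ 2) with hc
  have hcpos : 0 < c := by positivity
  set a : Fin n → ℝ := fun i => F i - F' i with ha
  set g : Fin n → ℝ := fun j => G j - G' j with hg
  set m : Fin n → Fin n → ℝ := fun i j => M i j - M' i j with hm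
  set B : Fin n → Fin n → ℝ := fun i j => F' i + G' j + M' i j with hB
  set D : Fin n → Fin n → ℝ := fun i j => a i + g j + m i j with hD
  have hZ' : ∀ s i j, Z s i j = B i j + s * D i j := by
    intro s i j
    rw [hZ]; simp only [hB, hD, ha, hg, hm]; ring
  have hhfun : h = fun s => c * ∑ i, ∑ j, Real.exp (k * (B i j + s * D i j)) := by
    funext s
    rw [hh]
    refine congrArg (c * ·) ?_
    refine Finset.sum_congr rfl fun i _ => Finset.sum_congr rfl fun j _ => ?_
    rw [hZ' s i j]
  have key : ∀ (i j : Fin n) (s : ℝ),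
      HasDerivAt (fun u => Real.exp (k * (B i j + u * D i j)))
        (Real.exp (k * (B i j + s * D i j)) * (k * D i j)) s := by
    intro i j s
    have h0 : HasDerivAt (fun u : ℝ => B i j + u * D i j) (D i j) s := by
      simpa using ((hasDerivAt_id s).mul_const (D i j)).const_add (B i j)
    have h1 : HasDerivAt (fun u : ℝ => k * (B i j + u * D i j)) (k * D i j) s :=
      h0.const_mul k
    simpa [mul_comm] using h1.exp
  have hd1 : ∀ s, HasDerivAt h
      (c * ∑ i, ∑ j, Real.exp (k * (B i j + s * D i j)) * (k * D i j)) s := by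
    intro s
    rw [hhfun]
    exact (HasDerivAt.fun_sum fun i _ => HasDerivAt.fun_sum fun j _ => key i j s).const_mul c
  have key2 : ∀ (i j : Fin n) (s : ℝ),
      HasDerivAt (fun u => Real.exp (k * (B i j + u * D i j)) * (k * D i j))
        (Real.exp (k * (B i j + s * D i j)) * (k * D i j) ^ 2) s := by
    intro i j s
    have := (key i j s).mul_const (k * D i j)
    simpa [sq, mul_assoc] using this
  have hderiv_h : deriv h = fun s =>
      c * ∑ i, ∑ j, Real.exp (k * (B i j + s * D i j)) * (k * D i j) := by
    funext s; exact (hd1 s).deriv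
  have hd2 : HasDerivAt (deriv h)
      (c * ∑ i, ∑ j, Real.exp (k * (B i j + t * D i j)) * (k * D i j) ^ 2) t := by
    rw [hderiv_h]
    exact (HasDerivAt.fun_sum fun i _ => HasDerivAt.fun_sum fun j _ => key2 i j t).const_mul c
  rw [hd2.deriv]
  -- exponential lower bound
  have hexp : ∀ i j, Real.exp (-L / ε) ≤ Real.exp (k * (B i j + t * D i j)) := by
    intro i j
    rw [Real.exp_le_exp, ← hZ' t i j]
    have habs := hL t ht i j
    have hZge : -(L / 2) ≤ Z t i j := neg_le_of_abs_le habs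
    calc -L / ε = k * (-(L / 2)) := by rw [hk]; field_simp
      _ ≤ k * Z t i j := by nlinarith [hkpos]
  -- sum identity
  have hgsum : ∑ j, g j = 0 := by
    simp only [hg]; rw [Finset.sum_sub_distrib, hG, hG']; ring
  have hmrow : ∀ i, ∑ j, m i j = 0 := by
    intro i; simp only [hm]; rw [Finset.sum_sub_distrib, hMrow i, hM'row i]; ring
  have hmcol : ∀ j, ∑ i, m i j = 0 := by
    intro j; simp only [hm]; rw [Finset.sum_sub_distrib, hMcol j, hM'col j]; ring
  have hrow : ∀ i, ∑ j, D i j ^ 2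
      = (n : ℝ) * a i ^ 2 + (∑ j, g j ^ 2) + (∑ j, m i j ^ 2) + 2 * ∑ j, g j * m i j := by
    intro i
    have e1 : ∑ j, D i j ^ 2 = ∑ j, (a i ^ 2 + g j ^ 2 + m i j ^ 2
        + (2 * a i) * g j + (2 * a i) * m i j + 2 * (g j * m i j)) :=
      Finset.sum_congr rfl fun j _ => by simp only [hD]; ring
    rw [e1]
    rw [Finset.sum_add_distrib, Finset.sum_add_distrib, Finset.sum_add_distrib,
      Finset.sum_add_distrib, Finset.sum_add_distrib,
      ← Finset.mul_sum, ← Finset.mul_sum, ← Finset.mul_sum,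
      hgsum, hmrow i, Finset.sum_const, Finset.card_univ, Fintype.card_fin]
    ring
  have hsum : ∑ i, ∑ j, D i j ^ 2
      = (∑ i, ∑ j, m i j ^ 2) + (n : ℝ) * (∑ i, a i ^ 2) + (n : ℝ) * (∑ j, g j ^ 2) := by
    have e2 : ∑ i, ∑ j, g j * m i j = 0 := by
      rw [Finset.sum_comm]
      refine Finset.sum_eq_zero fun j _ => ?_
      rw [← Finset.mul_sum, hmcol j, mul_zero]
    calc ∑ i, ∑ j, D i j ^ 2
        = ∑ i, ((n : ℝ) * a i ^ 2 + (∑ j, g j ^ 2) + (∑ j, m i j ^ 2)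
            + 2 * ∑ j, g j * m i j) := Finset.sum_congr rfl fun i _ => hrow i
      _ = (n : ℝ) * (∑ i, a i ^ 2) + (n : ℝ) * (∑ j, g j ^ 2) + (∑ i, ∑ j, m i j ^ 2)
            + 2 * ∑ i, ∑ j, g j * m i j := by
          rw [Finset.sum_add_distrib, Finset.sum_add_distrib, Finset.sum_add_distrib,
            ← Finset.mul_sum, ← Finset.mul_sum, Finset.sum_const, Finset.card_univ,
            Fintype.card_fin]
          ring
      _ = (∑ i, ∑ j, m i j ^ 2) + (n : ℝ) * (∑ i, a i ^ 2) + (n : ℝ) * (∑ j, g j ^ 2) := by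
          rw [e2]; ring
  -- main inequality
  have hlow : c * Real.exp (-L / ε) * (k ^ 2 * ∑ i, ∑ j, D i j ^ 2)
      ≤ c * ∑ i, ∑ j, Real.exp (k * (B i j + t * D i j)) * (k * D i j) ^ 2 := by
    have : ∑ i, ∑ j, Real.exp (-L / ε) * (k * D i j) ^ 2
        ≤ ∑ i, ∑ j, Real.exp (k * (B i j + t * D i j)) * (k * D i j) ^ 2 := by
      refine Finset.sum_le_sum fun i _ => Finset.sum_le_sum fun j _ => ?_
      exact mul_le_mul_of_nonneg_right (hexp i j) (sq_nonneg _)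
    have e3 : ∑ i, ∑ j, Real.exp (-L / ε) * (k * D i j) ^ 2
        = Real.exp (-L / ε) * (k ^ 2 * ∑ i, ∑ j, D i j ^ 2) := by
      simp only [Finset.mul_sum, mul_pow]
    calc c * Real.exp (-L / ε) * (k ^ 2 * ∑ i, ∑ j, D i j ^ 2)
        = c * ∑ i, ∑ j, Real.exp (-L / ε) * (k * D i j) ^ 2 := by rw [e3]; ring
      _ ≤ _ := by exact mul_le_mul_of_nonneg_left this (le_of_lt hcpos)
  refine le_trans (le_of_eq ?_) hlow
  rw [hsum]
  simp only [ha, hg, hm, hk, hc]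
  field_simp
end

section
/- Covariance 'U-statistic' expectation bound: let (xᵢ,yᵢ), i=1..n, be i.i.d. from a coupling π̂ on X×Y with marginals α and β, and let p: X×Y → ℝ be a bounded measurable function with ∫p(x,y)dα(x) = 1 for β-a.e. y, ‖p‖_∞ ≤ b. Then E[(1/n)Σⱼ(1 − (1/n)Σᵢ p(xᵢ,yⱼ))²] = (1/n²)E_{π̂}(p−1)² + ((n−1)/n²)E_{α⊗β}(1−p)² ≤ (b+1)²/n. -/
open MeasureTheory

lemma mu_comp_inj {Z : Type*} [MeasurableSpace Z] (ν : Measure Z)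
    [IsProbabilityMeasure ν] {m n : ℕ} (τ : Fin m → Fin n) (hτ : Function.Injective τ) :
    MeasurePreserving (fun ω : Fin n → Z => fun a => ω (τ a))
      (Measure.pi fun _ : Fin n => ν) (Measure.pi fun _ : Fin m => ν) := by
  classical
  have hmeas : Measurable fun ω : Fin n → Z => fun a => ω (τ a) :=
    measurable_pi_lambda _ fun a => measurable_pi_apply (τ a)
  refine ⟨hmeas, ?_⟩
  refine (Measure.pi_eq fun s hs => ?_).symm
  rw [Measure.map_apply hmeas (MeasurableSet.univ_pi hs)]
  set F : Fin n → Set Z := fun l => if h : ∃ a, τ a = l then s h.choose else Set.univ with hF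
  have hpre : (fun ω : Fin n → Z => fun a => ω (τ a)) ⁻¹' Set.pi Set.univ s
      = Set.pi Set.univ F := by
    ext ω
    simp only [Set.mem_preimage, Set.mem_univ_pi]
    constructor
    · intro h l
      by_cases hl : ∃ a, τ a = l
      · have h2 := h hl.choose
        rw [hl.choose_spec] at h2
        rw [hF]
        simpa only [dif_pos hl] using h2
      · rw [hF]; simp only [dif_neg hl]; trivial
    · intro h a
      have h2 := h (τ a)
      have he : ∃ a', τ a' = τ a := ⟨a, rfl⟩
      rw [hF] at h2
      simp only [dif_pos he] at h2
      have hca : he.choose = a := hτ he.choose_spec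
      rwa [hca] at h2
  rw [hpre, Measure.pi_pi]
  have h1 : ∀ l ∈ Finset.univ, l ∉ Finset.image τ Finset.univ → ν (F l) = 1 := by
    intro l _ hl
    have hne : ¬ ∃ a, τ a = l := by simpa using hl
    rw [hF]
    simp only [dif_neg hne]
    exact measure_univ
  calc ∏ l, ν (F l) = ∏ l ∈ Finset.image τ Finset.univ, ν (F l) :=
        (Finset.prod_subset (Finset.subset_univ _) h1).symm
    _ = ∏ a, ν (F (τ a)) := Finset.prod_image (fun a _ c _ h => hτ h)
    _ = ∏ a, ν (s a) := by
        refine Finset.prod_congr rfl fun a _ => ?_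
        have he : ∃ a', τ a' = τ a := ⟨a, rfl⟩
        have hca : he.choose = a := hτ he.choose_spec
        rw [hF]
        simp only [dif_pos he, hca]

lemma mp_eval {Z : Type*} [MeasurableSpace Z] (ν : Measure Z) [IsProbabilityMeasure ν]
    {n : ℕ} (i : Fin n) :
    MeasurePreserving (fun ω : Fin n → Z => ω i) (Measure.pi fun _ : Fin n => ν) ν := by
  have h1 := mu_comp_inj ν (![i]) (fun a c h => Subsingleton.elim a c)
  have h2 := measurePreserving_funUnique ν (Fin 1)
  have heq : (fun ω : Fin n → Z => ω i)
      = (MeasurableEquiv.funUnique (Fin 1) Z) ∘ (fun ω a => ω (![i] a)) := by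
    funext ω
    simp [MeasurableEquiv.funUnique_apply]
  rw [heq]
  exact h2.comp h1

lemma mp_pair {Z : Type*} [MeasurableSpace Z] (ν : Measure Z) [IsProbabilityMeasure ν]
    {n : ℕ} {i j : Fin n} (hij : i ≠ j) :
    MeasurePreserving (fun ω : Fin n → Z => (ω i, ω j))
      (Measure.pi fun _ : Fin n => ν) (ν.prod ν) := by
  have hinj : Function.Injective (![i, j]) := by
    intro a c h
    fin_cases a <;> fin_cases c <;> simp_all
  have h1 := mu_comp_inj ν (![i, j]) hinj
  have h2 := measurePreserving_piFinTwo (fun _ : Fin 2 => ν)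
  have heq : (fun ω : Fin n → Z => (ω i, ω j))
      = (MeasurableEquiv.piFinTwo fun _ : Fin 2 => Z) ∘ (fun ω a => ω (![i, j] a)) := by
    funext ω
    simp [MeasurableEquiv.piFinTwo_apply]
  rw [heq]
  exact h2.comp h1

lemma mp_triple {Z : Type*} [MeasurableSpace Z] (ν : Measure Z) [IsProbabilityMeasure ν]
    {n : ℕ} {i j k : Fin n} (hij : i ≠ j) (hik : i ≠ k) (hjk : j ≠ k) :
    MeasurePreserving (fun ω : Fin n → Z => (ω i, ω j, ω k))
      (Measure.pi fun _ : Fin n => ν) (ν.prod (ν.prod ν)) := by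
  have hinj : Function.Injective (![i, j, k]) := by
    intro a c h
    fin_cases a <;> fin_cases c <;> simp_all
  have h1 := mu_comp_inj ν (![i, j, k]) hinj
  have h3 := measurePreserving_piFinSuccAbove (fun _ : Fin 3 => ν) 0
  have h2 := (MeasurePreserving.id ν).prod (measurePreserving_piFinTwo (fun _ : Fin 2 => ν))
  have heq : (fun ω : Fin n → Z => (ω i, ω j, ω k))
      = (Prod.map id (MeasurableEquiv.piFinTwo fun _ : Fin 2 => Z))
        ∘ ((MeasurableEquiv.piFinSuccAbove (fun _ : Fin 3 => Z) 0)
        ∘ (fun ω a => ω (![i, j, k] a))) := by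
    funext ω
    simp [MeasurableEquiv.piFinSuccAbove_apply, MeasurableEquiv.piFinTwo_apply, Fin.succAbove,
      Fin.tail]
  rw [heq]
  exact h2.comp (h3.comp h1)

lemma mp_integral {A B : Type*} [MeasurableSpace A] [MeasurableSpace B] {μ : Measure A}
    {ν : Measure B} {f : A → B} (h : MeasurePreserving f μ ν) {g : B → ℝ}
    (hg : AEStronglyMeasurable g ν) : ∫ a, g (f a) ∂μ = ∫ x, g x ∂ν := by
  rw [← h.map_eq] at hg ⊢
  exact (integral_map h.measurable.aemeasurable hg).symm

lemma integrable_of_bound {A : Type*} [MeasurableSpace A] (μ : Measure A) [IsFiniteMeasure μ]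
    {f : A → ℝ} (hf : Measurable f) (C : ℝ) (h : ∀ a, |f a| ≤ C) : Integrable f μ := by
  refine ⟨hf.aestronglyMeasurable, ?_⟩
  apply HasFiniteIntegral.of_bounded (C := C)
  exact Filter.Eventually.of_forall fun a => by simpa [Real.norm_eq_abs] using h a

/-- covariance U-statistic expectation bound. With `(xᵢ, yᵢ)`
i.i.d. from a coupling `π̂` of `α, β`, and `p` a bounded density of a coupling
of `α, β` w.r.t. `α ⊗ β`,
`E[(1/n) ∑ⱼ (1 − (1/n) ∑ᵢ p(xᵢ, yⱼ))²]
  = (1/n²) E_{π̂}(p−1)² + ((n−1)/n²) E_{α⊗β}(1−p)² ≤ (b+1)²/n`. -/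
theorem marginal_ustatistic_bound {X Y : Type*} [MeasurableSpace X] [MeasurableSpace Y]
    (α : Measure X) (β : Measure Y)
    [IsProbabilityMeasure α] [IsProbabilityMeasure β]
    (πhat : Measure (X × Y)) [IsProbabilityMeasure πhat]
    (hfst : πhat.map Prod.fst = α) (hsnd : πhat.map Prod.snd = β)
    (p : X × Y → ℝ) (hpmeas : Measurable p)
    (b : ℝ) (hb : ∀ z, |p z| ≤ b)
    (hpmarg1 : ∀ᵐ y ∂β, ∫ x, p (x, y) ∂α = 1)
    (hpmarg2 : ∀ᵐ x ∂α, ∫ y, p (x, y) ∂β = 1)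
    (n : ℕ) (hn : 0 < n) :
    (∫ ω : Fin n → X × Y,
        (1 / (n : ℝ)) * ∑ j, (1 - (1 / (n : ℝ)) * ∑ i, p ((ω i).1, (ω j).2)) ^ 2
        ∂(Measure.pi fun _ : Fin n => πhat))
      = (1 / (n : ℝ) ^ 2) * (∫ z, (p z - 1) ^ 2 ∂πhat)
        + (((n : ℝ) - 1) / (n : ℝ) ^ 2) * (∫ z, (1 - p z) ^ 2 ∂(α.prod β)) ∧
    (∫ ω : Fin n → X × Y,
        (1 / (n : ℝ)) * ∑ j, (1 - (1 / (n : ℝ)) * ∑ i, p ((ω i).1, (ω j).2)) ^ 2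
        ∂(Measure.pi fun _ : Fin n => πhat))
      ≤ (b + 1) ^ 2 / n := by
  classical
  have hne : (n : ℝ) ≠ 0 := Nat.cast_ne_zero.mpr hn.ne'
  have hn1 : (1:ℝ) ≤ (n:ℝ) := by exact_mod_cast hn
  set q : X × Y → ℝ := fun z => 1 - p z with hq
  have hqmeas : Measurable q := measurable_const.sub hpmeas
  have hqb : ∀ z, |q z| ≤ b + 1 := by
    intro z
    rw [hq]
    simp only
    rcases abs_cases (1 - p z) with h1 | h1 <;> rcases abs_cases (p z) with h2 | h2 <;>
      linarith [hb z, h1.1, h1.2, h2.1, h2.2]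
  have hXY : Nonempty (X × Y) := by
    by_contra h
    have h1 : (Set.univ : Set (X × Y)) = ∅ := Set.univ_eq_empty_iff.mpr (not_nonempty_iff.mp h)
    have h2 := measure_univ (μ := πhat)
    rw [h1, measure_empty] at h2
    exact zero_ne_one h2
  have hb1 : (0:ℝ) ≤ b + 1 := le_trans (abs_nonneg _) (hqb hXY.some)
  -- the function g y = ∫ x, q (x, y) ∂α
  have hgmeas : Measurable fun y => ∫ x, q (x, y) ∂α :=
    (hqmeas.stronglyMeasurable.integral_prod_left').measurable
  have hg0 : ∀ᵐ y ∂β, (∫ x, q (x, y) ∂α) = 0 := by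
    filter_upwards [hpmarg1] with y hy
    have hintp : Integrable (fun x => p (x, y)) α :=
      integrable_of_bound α (hpmeas.comp measurable_prodMk_right) b (fun x => hb _)
    have h1 : ∫ x, q (x, y) ∂α = ∫ x, (1:ℝ) ∂α - ∫ x, p (x, y) ∂α := by
      rw [← integral_sub (integrable_const 1) hintp]
    rw [h1, hy]
    simp
  have hg0' : ∀ᵐ z ∂πhat, (∫ x, q (x, z.2) ∂α) = 0 := by
    have h := hg0
    rw [← hsnd] at h
    exact (MeasureTheory.ae_map_iff measurable_snd.aemeasurable
      (hgmeas (measurableSet_singleton (0:ℝ)))).mp h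
  have hq1 : ∀ y : Y, ∫ z : X × Y, q (z.1, y) ∂πhat = ∫ x, q (x, y) ∂α := by
    intro y
    rw [← hfst]
    exact (integral_map measurable_fst.aemeasurable
      ((hqmeas.comp measurable_prodMk_right).aestronglyMeasurable)).symm
  set Q' : ℝ := ∫ z, q z * q z ∂πhat with hQ'
  set R' : ℝ := ∫ z, q z * q z ∂(α.prod β) with hR'
  -- cross term integrals
  have crossf_meas : Measurable fun w : (X × Y) × (X × Y) => q w.1 * q (w.2.1, w.1.2) :=
    (hqmeas.comp measurable_fst).mul
      (hqmeas.comp ((measurable_snd.fst).prodMk (measurable_fst.snd)))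
  have hmulbound : ∀ (u v : X × Y), |q u * q v| ≤ (b + 1) ^ 2 := by
    intro u v
    rw [abs_mul]
    calc |q u| * |q v| ≤ (b+1) * (b+1) := mul_le_mul (hqb _) (hqb _) (abs_nonneg _) hb1
      _ = (b+1)^2 := by ring
  have crossf_int : Integrable (fun w : (X × Y) × (X × Y) => q w.1 * q (w.2.1, w.1.2))
      (πhat.prod πhat) :=
    integrable_of_bound _ crossf_meas ((b+1)^2) (fun w => hmulbound _ _)
  have cross : ∫ w, q w.1 * q (w.2.1, w.1.2) ∂(πhat.prod πhat) = 0 := by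
    rw [MeasureTheory.integral_prod _ crossf_int]
    have h1 : ∀ z : X × Y, (∫ w : X × Y, q z * q (w.1, z.2) ∂πhat)
        = q z * (∫ x, q (x, z.2) ∂α) := by
      intro z
      rw [integral_const_mul, hq1]
    calc (∫ z : X × Y, ∫ w : X × Y, q z * q (w.1, z.2) ∂πhat ∂πhat)
        = ∫ z : X × Y, q z * (∫ x, q (x, z.2) ∂α) ∂πhat :=
          integral_congr_ae (Filter.Eventually.of_forall h1)
      _ = 0 := by
          have h2 : ∀ᵐ z ∂πhat, q z * (∫ x, q (x, z.2) ∂α) = (0:ℝ) :=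
            hg0'.mono fun z hz => by rw [hz, mul_zero]
          rw [integral_congr_ae h2, integral_zero]
  have crossf_meas' : Measurable fun w : (X × Y) × (X × Y) => q (w.2.1, w.1.2) * q w.1 :=
    (hqmeas.comp ((measurable_snd.fst).prodMk (measurable_fst.snd))).mul
      (hqmeas.comp measurable_fst)
  have cross' : ∫ w, q (w.2.1, w.1.2) * q w.1 ∂(πhat.prod πhat) = 0 := by
    have heq : (fun w : (X × Y) × (X × Y) => q (w.2.1, w.1.2) * q w.1)
        = fun w => q w.1 * q (w.2.1, w.1.2) := by
      funext w; ring
    rw [heq]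
    exact cross
  -- the pair square integral
  have hmapab : (πhat.prod πhat).map (Prod.map Prod.fst Prod.snd) = α.prod β := by
    rw [← Measure.map_prod_map _ _ measurable_fst measurable_snd, hfst, hsnd]
  have pairf_meas : Measurable fun w : (X × Y) × (X × Y) => q (w.1.1, w.2.2) * q (w.1.1, w.2.2) :=
    (hqmeas.comp ((measurable_fst.fst).prodMk (measurable_snd.snd))).mul
      (hqmeas.comp ((measurable_fst.fst).prodMk (measurable_snd.snd)))
  have pairR : ∫ w, q (w.1.1, w.2.2) * q (w.1.1, w.2.2) ∂(πhat.prod πhat) = R' := by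
    rw [hR', ← hmapab]
    rw [integral_map (f := fun z => q z * q z) (measurable_fst.prodMap measurable_snd).aemeasurable
      ((hqmeas.mul hqmeas).aestronglyMeasurable)]
    rfl
  -- triple
  have trif_meas : Measurable fun w : (X × Y) × (X × Y) × (X × Y) =>
      q (w.2.1.1, w.1.2) * q (w.2.2.1, w.1.2) :=
    (hqmeas.comp ((measurable_snd.fst.fst).prodMk (measurable_fst.snd))).mul
      (hqmeas.comp ((measurable_snd.snd.fst).prodMk (measurable_fst.snd)))
  have trif_int : Integrable (fun w : (X × Y) × (X × Y) × (X × Y) =>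
      q (w.2.1.1, w.1.2) * q (w.2.2.1, w.1.2)) (πhat.prod (πhat.prod πhat)) :=
    integrable_of_bound _ trif_meas ((b+1)^2) (fun w => hmulbound _ _)
  have triple0 : ∫ w, q (w.2.1.1, w.1.2) * q (w.2.2.1, w.1.2)
      ∂(πhat.prod (πhat.prod πhat)) = 0 := by
    rw [MeasureTheory.integral_prod _ trif_int]
    have h1 : ∀ z : X × Y,
        (∫ v : (X × Y) × (X × Y), q (v.1.1, z.2) * q (v.2.1, z.2) ∂(πhat.prod πhat))
        = (∫ x, q (x, z.2) ∂α) * (∫ x, q (x, z.2) ∂α) := by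
      intro z
      rw [integral_prod_mul (f := fun v : X × Y => q (v.1, z.2))
        (g := fun v : X × Y => q (v.1, z.2)), hq1]
    calc (∫ z : X × Y, ∫ v : (X × Y) × (X × Y),
            q (v.1.1, z.2) * q (v.2.1, z.2) ∂(πhat.prod πhat) ∂πhat)
        = ∫ z : X × Y, (∫ x, q (x, z.2) ∂α) * (∫ x, q (x, z.2) ∂α) ∂πhat :=
          integral_congr_ae (Filter.Eventually.of_forall h1)
      _ = 0 := by
          have h2 : ∀ᵐ z ∂πhat, (∫ x, q (x, z.2) ∂α) * (∫ x, q (x, z.2) ∂α) = (0:ℝ) :=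
            hg0'.mono fun z hz => by rw [hz, mul_zero]
          rw [integral_congr_ae h2, integral_zero]
  -- the key computation
  set μpi := (Measure.pi fun _ : Fin n => πhat) with hμpi
  have key : ∀ j i k : Fin n,
      (∫ ω, q ((ω i).1, (ω j).2) * q ((ω k).1, (ω j).2) ∂μpi)
        = if i = k then (if i = j then Q' else R') else 0 := by
    intro j i k
    by_cases hik : i = k
    · subst hik
      by_cases hij : i = j
      · subst hij
        rw [if_pos rfl, if_pos rfl]
        have h := mp_integral (mp_eval πhat i) (g := fun z => q z * q z)
          ((hqmeas.mul hqmeas).aestronglyMeasurable)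
        simpa using h
      · rw [if_pos rfl, if_neg hij]
        have h := mp_integral (mp_pair πhat hij)
          (g := fun w : (X × Y) × (X × Y) => q (w.1.1, w.2.2) * q (w.1.1, w.2.2))
          pairf_meas.aestronglyMeasurable
        exact h.trans pairR
    · rw [if_neg hik]
      by_cases hij : i = j
      · subst hij
        have h := mp_integral (mp_pair πhat hik)
          (g := fun w : (X × Y) × (X × Y) => q w.1 * q (w.2.1, w.1.2))
          crossf_meas.aestronglyMeasurable
        have hg : (∫ ω, q ((ω i).1, (ω i).2) * q ((ω k).1, (ω i).2) ∂μpi)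
            = ∫ ω, q (ω i) * q ((ω k).1, (ω i).2) ∂μpi := by
          simp only [Prod.mk.eta]
        rw [hg]
        exact h.trans cross
      · by_cases hkj : k = j
        · subst hkj
          have h := mp_integral (mp_pair πhat (Ne.symm hik))
            (g := fun w : (X × Y) × (X × Y) => q (w.2.1, w.1.2) * q w.1)
            crossf_meas'.aestronglyMeasurable
          have hg : (∫ ω, q ((ω i).1, (ω k).2) * q ((ω k).1, (ω k).2) ∂μpi)
              = ∫ ω, q ((ω i).1, (ω k).2) * q (ω k) ∂μpi := by
            simp only [Prod.mk.eta]
          rw [hg]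
          exact h.trans cross'
        · have h := mp_integral (mp_triple πhat (Ne.symm hij) (Ne.symm hkj) hik)
            (g := fun w : (X × Y) × (X × Y) × (X × Y) =>
              q (w.2.1.1, w.1.2) * q (w.2.2.1, w.1.2))
            trif_meas.aestronglyMeasurable
          exact h.trans triple0
  -- integrability of the summands
  have hint3 : ∀ i j k : Fin n, Integrable
      (fun ω : Fin n → X × Y => q ((ω i).1, (ω j).2) * q ((ω k).1, (ω j).2)) μpi := by
    intro i j k
    refine integrable_of_bound _ ?_ ((b+1)^2) (fun ω => hmulbound _ _)
    exact (hqmeas.comp ((measurable_fst.comp (measurable_pi_apply i)).prodMk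
        (measurable_snd.comp (measurable_pi_apply j)))).mul
      (hqmeas.comp ((measurable_fst.comp (measurable_pi_apply k)).prodMk
        (measurable_snd.comp (measurable_pi_apply j))))
  -- pointwise algebraic identity
  have hpt : ∀ ω : Fin n → X × Y,
      (1 / (n : ℝ)) * ∑ j, (1 - (1 / (n : ℝ)) * ∑ i, p ((ω i).1, (ω j).2)) ^ 2
        = (1 / (n:ℝ)^3) * ∑ j, ∑ i, ∑ k,
            q ((ω i).1, (ω j).2) * q ((ω k).1, (ω j).2) := by
    intro ω
    have h1 : ∀ j : Fin n, 1 - (1/(n:ℝ)) * ∑ i, p ((ω i).1, (ω j).2)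
        = (1/(n:ℝ)) * ∑ i, q ((ω i).1, (ω j).2) := by
      intro j
      have hs : ∑ i : Fin n, q ((ω i).1, (ω j).2)
          = (n:ℝ) - ∑ i, p ((ω i).1, (ω j).2) := by
        simp only [hq]
        rw [Finset.sum_sub_distrib]
        simp [Finset.card_univ]
      rw [hs]
      field_simp
    calc (1 / (n : ℝ)) * ∑ j, (1 - (1 / (n : ℝ)) * ∑ i, p ((ω i).1, (ω j).2)) ^ 2
        = (1/(n:ℝ)) * ∑ j, ((1/(n:ℝ)) * ∑ i, q ((ω i).1, (ω j).2))^2 := by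
          rw [Finset.sum_congr rfl fun j _ => by rw [h1 j]]
      _ = (1/(n:ℝ)) * ∑ j, (1/(n:ℝ)^2) *
            (∑ i, ∑ k, q ((ω i).1, (ω j).2) * q ((ω k).1, (ω j).2)) := by
          refine congrArg _ (Finset.sum_congr rfl fun j _ => ?_)
          rw [mul_pow, pow_two (∑ i, q ((ω i).1, (ω j).2)), Finset.sum_mul_sum]
          rw [div_pow, one_pow]
      _ = (1/(n:ℝ)^3) * ∑ j, ∑ i, ∑ k, q ((ω i).1, (ω j).2) * q ((ω k).1, (ω j).2) := by
          rw [← Finset.mul_sum, ← mul_assoc]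
          congr 1
          ring
  -- sum of key values
  have hsum : (∑ j : Fin n, ∑ i : Fin n, ∑ k : Fin n,
      (if i = k then (if i = j then Q' else R') else 0))
      = (n:ℝ) * (Q' + ((n:ℝ) - 1) * R') := by
    have h1 : ∀ j i : Fin n, (∑ k : Fin n, (if i = k then (if i = j then Q' else R') else 0))
        = (if i = j then Q' else R') := by
      intro j i
      rw [Finset.sum_ite_eq]
      simp
    have h2 : ∀ j : Fin n, (∑ i : Fin n, (if i = j then Q' else R'))
        = Q' + ((n:ℝ) - 1) * R' := by
      intro j
      have h3 : ∀ i : Fin n, (if i = j then Q' else R')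
          = (if i = j then Q' - R' else 0) + R' := by
        intro i; split_ifs <;> ring
      rw [Finset.sum_congr rfl fun i _ => h3 i, Finset.sum_add_distrib, Finset.sum_ite_eq',
        Finset.sum_const]
      simp only [Finset.mem_univ, if_true, Finset.card_univ, Fintype.card_fin, nsmul_eq_mul]
      ring
    rw [Finset.sum_congr rfl fun j _ => by
      rw [Finset.sum_congr rfl fun i _ => h1 j i, h2 j]]
    rw [Finset.sum_const]
    simp only [Finset.card_univ, Fintype.card_fin, nsmul_eq_mul]
  -- main equality
  have hQ'' : Q' = ∫ z, (p z - 1) ^ 2 ∂πhat := by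
    rw [hQ']
    refine integral_congr_ae (Filter.Eventually.of_forall fun z => ?_)
    simp only [hq]
    ring
  have hR'' : R' = ∫ z, (1 - p z) ^ 2 ∂(α.prod β) := by
    rw [hR']
    refine integral_congr_ae (Filter.Eventually.of_forall fun z => ?_)
    simp only [hq]
    ring
  have hEq : (∫ ω : Fin n → X × Y,
      (1 / (n : ℝ)) * ∑ j, (1 - (1 / (n : ℝ)) * ∑ i, p ((ω i).1, (ω j).2)) ^ 2 ∂μpi)
      = (1 / (n : ℝ) ^ 2) * (∫ z, (p z - 1) ^ 2 ∂πhat)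
        + (((n : ℝ) - 1) / (n : ℝ) ^ 2) * (∫ z, (1 - p z) ^ 2 ∂(α.prod β)) := by
    calc (∫ ω : Fin n → X × Y,
        (1 / (n : ℝ)) * ∑ j, (1 - (1 / (n : ℝ)) * ∑ i, p ((ω i).1, (ω j).2)) ^ 2 ∂μpi)
        = ∫ ω, (1 / (n:ℝ)^3) * ∑ j, ∑ i, ∑ k,
            q ((ω i).1, (ω j).2) * q ((ω k).1, (ω j).2) ∂μpi :=
          integral_congr_ae (Filter.Eventually.of_forall hpt)
      _ = (1 / (n:ℝ)^3) * ∫ ω, ∑ j, ∑ i, ∑ k,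
            q ((ω i).1, (ω j).2) * q ((ω k).1, (ω j).2) ∂μpi := integral_const_mul _ _
      _ = (1 / (n:ℝ)^3) * ∑ j, ∑ i, ∑ k,
            (∫ ω, q ((ω i).1, (ω j).2) * q ((ω k).1, (ω j).2) ∂μpi) := by
          congr 1
          rw [integral_finset_sum _ (fun j _ => integrable_finset_sum _
            (fun i _ => integrable_finset_sum _ (fun k _ => hint3 i j k)))]
          refine Finset.sum_congr rfl fun j _ => ?_
          rw [integral_finset_sum _ (fun i _ => integrable_finset_sum _
            (fun k _ => hint3 i j k))]
          refine Finset.sum_congr rfl fun i _ => ?_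
          rw [integral_finset_sum _ (fun k _ => hint3 i j k)]
      _ = (1 / (n:ℝ)^3) * ((n:ℝ) * (Q' + ((n:ℝ) - 1) * R')) := by
          rw [Finset.sum_congr rfl fun j _ => Finset.sum_congr rfl fun i _ =>
            Finset.sum_congr rfl fun k _ => key j i k, hsum]
      _ = (1 / (n : ℝ) ^ 2) * Q' + (((n : ℝ) - 1) / (n : ℝ) ^ 2) * R' := by
          field_simp
      _ = (1 / (n : ℝ) ^ 2) * (∫ z, (p z - 1) ^ 2 ∂πhat)
          + (((n : ℝ) - 1) / (n : ℝ) ^ 2) * (∫ z, (1 - p z) ^ 2 ∂(α.prod β)) := by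
          rw [hQ'', hR'']
  refine ⟨hEq, ?_⟩
  rw [hEq]
  -- bound part
  have hsqb : ∀ z, (p z - 1) ^ 2 ≤ (b + 1) ^ 2 := by
    intro z
    have h := abs_le.mp (hb z)
    nlinarith [h.1, h.2]
  have hsqb' : ∀ z, (1 - p z) ^ 2 ≤ (b + 1) ^ 2 := by
    intro z
    have h := abs_le.mp (hb z)
    nlinarith [h.1, h.2]
  have hQint : Integrable (fun z => (p z - 1) ^ 2) πhat := by
    refine integrable_of_bound _ ((hpmeas.sub measurable_const).pow_const 2) ((b+1)^2)
      (fun z => ?_)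
    rw [abs_of_nonneg (sq_nonneg _)]
    exact hsqb z
  have hRint : Integrable (fun z => (1 - p z) ^ 2) (α.prod β) := by
    refine integrable_of_bound _ ((measurable_const.sub hpmeas).pow_const 2) ((b+1)^2)
      (fun z => ?_)
    rw [abs_of_nonneg (sq_nonneg _)]
    exact hsqb' z
  have hQle : (∫ z, (p z - 1) ^ 2 ∂πhat) ≤ (b + 1) ^ 2 := by
    calc (∫ z, (p z - 1) ^ 2 ∂πhat) ≤ ∫ _z, (b + 1) ^ 2 ∂πhat :=
          integral_mono hQint (integrable_const _) hsqb
      _ = (b + 1) ^ 2 := by simp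
  have hRle : (∫ z, (1 - p z) ^ 2 ∂(α.prod β)) ≤ (b + 1) ^ 2 := by
    calc (∫ z, (1 - p z) ^ 2 ∂(α.prod β)) ≤ ∫ _z, (b + 1) ^ 2 ∂(α.prod β) :=
          integral_mono hRint (integrable_const _) hsqb'
      _ = (b + 1) ^ 2 := by simp
  have c1 : (0:ℝ) ≤ 1 / (n:ℝ)^2 := by positivity
  have c2 : (0:ℝ) ≤ ((n:ℝ) - 1) / (n:ℝ)^2 := by
    apply div_nonneg _ (by positivity)
    linarith
  calc (1 / (n : ℝ) ^ 2) * (∫ z, (p z - 1) ^ 2 ∂πhat)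
        + (((n : ℝ) - 1) / (n : ℝ) ^ 2) * (∫ z, (1 - p z) ^ 2 ∂(α.prod β))
      ≤ (1 / (n : ℝ) ^ 2) * (b + 1) ^ 2 + (((n : ℝ) - 1) / (n : ℝ) ^ 2) * (b + 1) ^ 2 :=
        add_le_add (mul_le_mul_of_nonneg_left hQle c1) (mul_le_mul_of_nonneg_left hRle c2)
    _ = (b + 1) ^ 2 / n := by
        field_simp
        ring
end

section
/- Graphical lasso limit certificate: for a symmetric positive definite matrix Â ∈ ℝ^{d×d} with sign pattern support I = {(i,j) : Â_{ij} ≠ 0}, and with Hessian proxy H_ε = ε^{-1}[(Â⊗Â)(Σ_ε^{-1}⊗Σ_ε^{-1} + Id)]^{-1} restricted to symmetric matrices, where Σ_ε = U diag(√(1+ε²/(4dᵢ²)) − ε/(2dᵢ)) Uᵀ for the eigendecomposition Â = U diag(dᵢ) Uᵀ, the certificate z_ε = (H_ε)_{(:,I)}((H_ε)_{(I,I)})^{-1}sign(Â)_I converges as ε → 0⁺ to (Â^{-1}⊗Â^{-1})_{(:,I)}((Â^{-1}⊗Â^{-1})_{(I,I)})^{-1}sign(Â)_I, provided (Â^{-1}⊗Â^{-1})_{(I,I)}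 is invertible. -/
attribute [local instance] Classical.propDecidable

open Matrix Filter
open scoped Kronecker

lemma glc_smul_inv {n : Type*} [Fintype n] [DecidableEq n] (c : ℝ) (hc : c ≠ 0)
    (A : Matrix n n ℝ) : (c • A)⁻¹ = c⁻¹ • A⁻¹ := by
  by_cases h : IsUnit A.det
  · have : Invertible c := invertibleOfNonzero hc
    rw [Matrix.inv_smul (A := A) c h, invOf_eq_inv]
  · have h1 : A⁻¹ = 0 := Matrix.nonsing_inv_apply_not_isUnit _ h
    have h2 : (c • A)⁻¹ = 0 := by
      apply Matrix.nonsing_inv_apply_not_isUnit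
      rw [Matrix.det_smul]
      simp only [isUnit_iff_ne_zero, ne_eq, not_not] at h ⊢
      simp [h, hc]
    rw [h1, h2, smul_zero]

lemma glc_kron_cont {n : Type*} [Fintype n] [DecidableEq n] :
    Continuous (fun X : Matrix n n ℝ => X ⊗ₖ X) := by
  apply continuous_matrix
  intro i j
  simp only [Matrix.kroneckerMap_apply]
  exact (continuous_id.matrix_elem i.1 j.1).mul
    (continuous_id.matrix_elem i.2 j.2)

lemma glc_inv_continuousAt {n : Type*} [Fintype n] [DecidableEq n]
    {A : Matrix n n ℝ} (h : A.det ≠ 0) : ContinuousAt Inv.inv A := by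
  apply continuousAt_matrix_inv
  rw [Ring.inverse_eq_inv']
  exact continuousAt_inv₀ h

/-- graphical lasso limit certificate. As `ε → 0⁺`, the
certificate built from the Hessian proxy
`H_ε = ε⁻¹ [(Â⊗Â)(Σ_ε⁻¹⊗Σ_ε⁻¹ + Id)]⁻¹` converges to the graphical lasso
certificate built from `Â⁻¹ ⊗ Â⁻¹`. -/
theorem graphical_lasso_limit_certificate {d : ℕ}
    (Ahat : Matrix (Fin d) (Fin d) ℝ) (hAhat : Ahat.PosDef) (hsym : Ahatᵀ = Ahat)
    (U : Matrix (Fin d) (Fin d) ℝ) (hU : U * Uᵀ = 1) (hU' : Uᵀ * U = 1)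
    (dvec : Fin d → ℝ) (hd : ∀ i, 0 < dvec i)
    (heig : Ahat = U * Matrix.diagonal dvec * Uᵀ)
    (Sig : ℝ → Matrix (Fin d) (Fin d) ℝ)
    (hSig : ∀ ε, Sig ε = U * Matrix.diagonal
      (fun i => Real.sqrt (1 + ε ^ 2 / (4 * (dvec i) ^ 2)) - ε / (2 * dvec i)) * Uᵀ)
    (Heps : ℝ → Matrix (Fin d × Fin d) (Fin d × Fin d) ℝ)
    (hHeps : ∀ ε, Heps ε =
      ε⁻¹ • ((Ahat ⊗ₖ Ahat) * ((Sig ε)⁻¹ ⊗ₖ (Sig ε)⁻¹ + 1))⁻¹)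
    (HepsII : ℝ → Matrix {p : Fin d × Fin d // Ahat p.1 p.2 ≠ 0}
      {p : Fin d × Fin d // Ahat p.1 p.2 ≠ 0} ℝ)
    (hHepsII : ∀ ε a b, HepsII ε a b = Heps ε a b)
    (zeps : ℝ → (Fin d × Fin d) → ℝ)
    (hzeps : ∀ ε p, zeps ε p = ∑ q : {p : Fin d × Fin d // Ahat p.1 p.2 ≠ 0},
      Heps ε p q * ((HepsII ε)⁻¹ *ᵥ
        (fun k : {p : Fin d × Fin d // Ahat p.1 p.2 ≠ 0} =>
          Real.sign (Ahat k.1.1 k.1.2))) q)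
    (K : Matrix (Fin d × Fin d) (Fin d × Fin d) ℝ) (hK : K = Ahat⁻¹ ⊗ₖ Ahat⁻¹)
    (KII : Matrix {p : Fin d × Fin d // Ahat p.1 p.2 ≠ 0}
      {p : Fin d × Fin d // Ahat p.1 p.2 ≠ 0} ℝ)
    (hKII : ∀ a b, KII a b = K a b)
    (hKIIinv : IsUnit KII.det)
    (zlim : (Fin d × Fin d) → ℝ)
    (hzlim : ∀ p, zlim p = ∑ q : {p : Fin d × Fin d // Ahat p.1 p.2 ≠ 0},
      K p q * (KII⁻¹ *ᵥ
        (fun k : {p : Fin d × Fin d // Ahat p.1 p.2 ≠ 0} =>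
          Real.sign (Ahat k.1.1 k.1.2))) q) :
    Tendsto zeps (nhdsWithin 0 (Set.Ioi 0)) (nhds zlim) := by
  classical
  set l := nhdsWithin (0:ℝ) (Set.Ioi 0) with hl
  set s : {p : Fin d × Fin d // Ahat p.1 p.2 ≠ 0} → ℝ :=
    fun k => Real.sign (Ahat k.1.1 k.1.2) with hs
  set v : {p : Fin d × Fin d // Ahat p.1 p.2 ≠ 0} → Fin d × Fin d := Subtype.val with hv
  set G : ℝ → Matrix (Fin d × Fin d) (Fin d × Fin d) ℝ :=
    fun ε => ((Ahat ⊗ₖ Ahat) * ((Sig ε)⁻¹ ⊗ₖ (Sig ε)⁻¹ + 1))⁻¹ with hG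
  set F : Matrix (Fin d × Fin d) (Fin d × Fin d) ℝ → (Fin d × Fin d) → ℝ :=
    fun X p => ∑ q : {p : Fin d × Fin d // Ahat p.1 p.2 ≠ 0}, X p (v q) * ((X.submatrix v v)⁻¹ *ᵥ s) q with hF
  have hdet0 : Ahat.det ≠ 0 := ne_of_gt hAhat.det_pos
  -- Step A: for ε > 0, zeps ε = F (G ε)
  have hzF : ∀ ε ∈ Set.Ioi (0:ℝ), zeps ε = F (G ε) := by
    intro ε hε
    have hεne : (ε:ℝ) ≠ 0 := ne_of_gt hε
    funext p
    have hHG : Heps ε = ε⁻¹ • G ε := hHeps ε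
    have hHII : HepsII ε = ε⁻¹ • ((G ε).submatrix v v) := by
      ext a b
      rw [hHepsII, hHG]
      rfl
    rw [hzeps]
    simp only [hF, hHII, glc_smul_inv _ (inv_ne_zero hεne), inv_inv, hHG,
      Matrix.smul_apply, Matrix.smul_mulVec, Pi.smul_apply, smul_eq_mul]
    refine Finset.sum_congr rfl fun q _ => ?_
    generalize G ε p (v q) = a
    generalize (((G ε).submatrix v v)⁻¹ *ᵥ s) q = b
    rw [show ε⁻¹ * a * (ε * b) = (ε⁻¹ * ε) * (a * b) from by ring,
      inv_mul_cancel₀ hεne, one_mul]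
  -- Step B: G → 2⁻¹ • K along l
  have tf : Tendsto (fun ε : ℝ => (fun i => Real.sqrt (1 + ε ^ 2 / (4 * (dvec i) ^ 2))
      - ε / (2 * dvec i))) l (nhds (fun _ => (1:ℝ))) := by
    rw [tendsto_pi_nhds]
    intro i
    have hc : ContinuousAt (fun ε : ℝ =>
        Real.sqrt (1 + ε ^ 2 / (4 * (dvec i) ^ 2)) - ε / (2 * dvec i)) 0 := by
      apply ContinuousAt.sub
      · exact Real.continuous_sqrt.continuousAt.comp (by fun_prop)
      · fun_prop
    have h0 : Real.sqrt (1 + (0:ℝ) ^ 2 / (4 * (dvec i) ^ 2)) - 0 / (2 * dvec i) = 1 := by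
      simp
    have h2 : Tendsto (fun ε : ℝ =>
        Real.sqrt (1 + ε ^ 2 / (4 * (dvec i) ^ 2)) - ε / (2 * dvec i)) l
        (nhds (Real.sqrt (1 + (0:ℝ) ^ 2 / (4 * (dvec i) ^ 2)) - 0 / (2 * dvec i))) :=
      hc.tendsto.mono_left nhdsWithin_le_nhds
    rw [h0] at h2
    exact h2
  have tSig : Tendsto Sig l (nhds 1) := by
    have cont : Continuous (fun x : Fin d → ℝ => U * Matrix.diagonal x * Uᵀ) :=
      (continuous_const.matrix_mul (continuous_id.matrix_diagonal)).matrix_mul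
        continuous_const
    have := (cont.tendsto _).comp tf
    have h1 : U * Matrix.diagonal (fun _ => (1:ℝ)) * Uᵀ = 1 := by
      rw [show (Matrix.diagonal (fun _ => (1:ℝ))) = 1 from Matrix.diagonal_one,
        mul_one, hU]
    rw [h1] at this
    exact this.congr fun ε => by rw [Function.comp, hSig]
  have tSigInv : Tendsto (fun ε => (Sig ε)⁻¹) l (nhds 1) := by
    have := (glc_inv_continuousAt (A := (1 : Matrix (Fin d) (Fin d) ℝ))
      (by simp)).tendsto.comp tSig
    simpa [Function.comp_def] using this
  have tKron : Tendsto (fun ε => (Sig ε)⁻¹ ⊗ₖ (Sig ε)⁻¹) l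
      (nhds ((1 : Matrix (Fin d) (Fin d) ℝ) ⊗ₖ 1)) :=
    (glc_kron_cont.tendsto _).comp tSigInv
  set L : Matrix (Fin d × Fin d) (Fin d × Fin d) ℝ := (2:ℝ) • (Ahat ⊗ₖ Ahat) with hL
  have hdetL : L.det ≠ 0 := by
    rw [hL, Matrix.det_smul, Matrix.det_kronecker]
    exact mul_ne_zero (pow_ne_zero _ two_ne_zero)
      (mul_ne_zero (pow_ne_zero _ hdet0) (pow_ne_zero _ hdet0))
  have tM : Tendsto (fun ε => (Ahat ⊗ₖ Ahat) * ((Sig ε)⁻¹ ⊗ₖ (Sig ε)⁻¹ + 1)) l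
      (nhds L) := by
    have cont : Continuous (fun X : Matrix (Fin d × Fin d) (Fin d × Fin d) ℝ =>
        (Ahat ⊗ₖ Ahat) * (X + 1)) :=
      continuous_const.matrix_mul (continuous_id.add continuous_const)
    have := (cont.tendsto _).comp tKron
    have h1 : (Ahat ⊗ₖ Ahat) * ((1 : Matrix (Fin d) (Fin d) ℝ) ⊗ₖ 1 + 1) = L := by
      rw [Matrix.one_kronecker_one, hL, mul_add, mul_one, two_smul]
    rw [h1] at this
    exact this
  have hLinv : L⁻¹ = (2:ℝ)⁻¹ • K := by
    rw [hL, glc_smul_inv _ two_ne_zero, Matrix.inv_kronecker, hK]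
  have tG : Tendsto G l (nhds ((2:ℝ)⁻¹ • K)) := by
    have := (glc_inv_continuousAt hdetL).tendsto.comp tM
    rw [hLinv] at this
    exact this
  -- Step C: submatrix and inverses
  have hsubK : ((2:ℝ)⁻¹ • K).submatrix v v = (2:ℝ)⁻¹ • KII := by
    ext a b
    simp [hKII]
  have hdetKII : KII.det ≠ 0 := hKIIinv.ne_zero
  have hdetKII2 : ((2:ℝ)⁻¹ • KII).det ≠ 0 := by
    rw [Matrix.det_smul]
    exact mul_ne_zero (pow_ne_zero _ (by norm_num)) hdetKII
  have tsub : Tendsto (fun ε => (G ε).submatrix v v) l (nhds ((2:ℝ)⁻¹ • KII)) := by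
    have := ((continuous_id.matrix_submatrix v v).tendsto _).comp tG
    rw [show (id ((2:ℝ)⁻¹ • K)).submatrix v v = (2:ℝ)⁻¹ • KII from hsubK] at this
    exact this
  have tinv : Tendsto (fun ε => ((G ε).submatrix v v)⁻¹) l (nhds ((2:ℝ) • KII⁻¹)) := by
    have := (glc_inv_continuousAt hdetKII2).tendsto.comp tsub
    have h1 : ((2:ℝ)⁻¹ • KII)⁻¹ = (2:ℝ) • KII⁻¹ := by
      rw [glc_smul_inv _ (by norm_num), inv_inv]
    rw [h1] at this
    exact this
  have tvec : Tendsto (fun ε => ((G ε).submatrix v v)⁻¹ *ᵥ s) l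
      (nhds (((2:ℝ) • KII⁻¹) *ᵥ s)) := by
    have cont : Continuous (fun X : Matrix {p : Fin d × Fin d // Ahat p.1 p.2 ≠ 0} {p : Fin d × Fin d // Ahat p.1 p.2 ≠ 0} ℝ => X *ᵥ s) :=
      continuous_id.matrix_mulVec continuous_const
    exact (cont.tendsto _).comp tinv
  -- combine
  have tFG : Tendsto (fun ε => F (G ε)) l (nhds zlim) := by
    rw [tendsto_pi_nhds]
    intro p
    have key : Tendsto (fun ε => F (G ε) p) l
        (nhds (∑ q : {p : Fin d × Fin d // Ahat p.1 p.2 ≠ 0}, ((2:ℝ)⁻¹ • K) p (v q) * (((2:ℝ) • KII⁻¹) *ᵥ s) q)) := by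
      apply tendsto_finset_sum
      intro q _
      exact (((continuous_id.matrix_elem p (v q)).tendsto _).comp tG).mul
        (((continuous_apply q).tendsto _).comp tvec)
    have hval : (∑ q : {p : Fin d × Fin d // Ahat p.1 p.2 ≠ 0}, ((2:ℝ)⁻¹ • K) p (v q) * (((2:ℝ) • KII⁻¹) *ᵥ s) q) = zlim p := by
      rw [hzlim]
      refine Finset.sum_congr rfl fun q _ => ?_
      simp only [Matrix.smul_apply, Matrix.smul_mulVec, Pi.smul_apply,
        smul_eq_mul]
      ring
    rw [hval] at key
    exact key
  have heq : (fun ε => F (G ε)) =ᶠ[l] zeps :=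
    Filter.eventuallyEq_of_mem self_mem_nhdsWithin fun ε hε => (hzF ε hε).symm
  exact Filter.Tendsto.congr' heq tFG
end
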